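/- arXiv:2503.15292 — 10 statements merged into one kernel-verified Lean document; each statement's English description precedes it below -/
import Mathlib

section
/- Every ortholattice is an Ex-lattice; in fact every ortholattice satisfies the stronger inequality a ∧ ¬¬f ≤ ¬¬(a ∧ f) ∧ f ∧ ((b ∧ (c ∨ d)) ∨ ¬(b ∧ (c ∨ d))) for all a, b, c, d, f. -/
/-- A *fundamental negation* on a bounded lattice: antitone, semi-complementation,
double-negation introduction. A bounded lattice with such a negation is a
*fundamental lattice*. -/
class FNeg (L : Type*) [Lattice L] [BoundedOrder L] where
  neg : L → L
  neg_antitone : ∀ a b : L, a ≤ b → neg b ≤ neg a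
  inf_neg : ∀ a : L, a ⊓ neg a = ⊥
  le_neg_neg : ∀ a : L, a ≤ neg (neg a)

open FNeg

/-- The axiom (Ex). -/
def ExAx (L : Type*) [Lattice L] [BoundedOrder L] [FNeg L] : Prop :=
  ∀ a b c d e f : L,
    neg (a ⊓ ((b ⊓ c) ⊔ (b ⊓ d))) ⊓ a ⊓ (c ⊔ e) ⊓ neg (neg f) ≤
      neg (neg (a ⊓ f)) ⊓ ((a ⊓ c) ⊔ (a ⊓ e) ⊔ f) ⊓ ((b ⊓ (c ⊔ d)) ⊔ neg (b ⊓ (c ⊔ d)))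

/-- The axiom (Nu). -/
def NuAx (L : Type*) [Lattice L] [BoundedOrder L] [FNeg L] : Prop :=
  ∀ p q : L, neg (neg p) ⊓ neg (neg q) ≤ neg (neg (p ⊓ q))

/-- The axiom (Vi). -/
def ViAx (L : Type*) [Lattice L] [BoundedOrder L] [FNeg L] : Prop :=
  ∀ a c e f : L, a ⊓ (c ⊔ e) ⊓ neg (neg f) ≤ (a ⊓ c) ⊔ (a ⊓ e) ⊔ f

/-- The axiom (Cl). -/
def ClAx (L : Type*) [Lattice L] [BoundedOrder L] [FNeg L] : Prop :=
  ∀ a b c d : L, neg (a ⊓ ((b ⊓ c) ⊔ (b ⊓ d))) ⊓ a ≤ (b ⊓ (c ⊔ d)) ⊔ neg (b ⊓ (c ⊔ d))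

theorem ortholattice_exAx {L : Type*} [Lattice L] [BoundedOrder L] [FNeg L]
    (horth : ∀ a : L, neg (neg a) = a) :
    ExAx L ∧
      ∀ a b c d f : L,
        a ⊓ neg (neg f) ≤
          neg (neg (a ⊓ f)) ⊓ f ⊓ ((b ⊓ (c ⊔ d)) ⊔ neg (b ⊓ (c ⊔ d))) := by
  have htop : ∀ x : L, x ⊔ neg x = ⊤ := by
    intro x
    have hnt : (neg (⊤ : L)) = ⊥ := by
      have := inf_neg (⊤ : L)
      simpa using this
    have hnb : (neg (⊥ : L)) = ⊤ := by
      rw [← hnt, horth]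
    have h1 : neg (x ⊔ neg x) ≤ neg x ⊓ x := by
      refine le_inf ?_ ?_
      · exact neg_antitone _ _ le_sup_left
      · have := neg_antitone (neg x) (x ⊔ neg x) le_sup_right
        calc neg (x ⊔ neg x) ≤ neg (neg x) := this
          _ = x := horth x
    have h2 : neg (x ⊔ neg x) = ⊥ := by
      have : neg x ⊓ x = ⊥ := by rw [inf_comm]; exact inf_neg x
      exact le_bot_iff.mp (this ▸ h1)
    calc x ⊔ neg x = neg (neg (x ⊔ neg x)) := (horth _).symm
      _ = neg ⊥ := by rw [h2]
      _ = ⊤ := hnb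
  constructor
  · intro a b c d e f
    refine le_inf (le_inf ?_ ?_) ?_
    · calc neg (a ⊓ ((b ⊓ c) ⊔ (b ⊓ d))) ⊓ a ⊓ (c ⊔ e) ⊓ neg (neg f)
          ≤ a ⊓ f := by
            refine le_inf ?_ ?_
            · exact le_trans inf_le_left (le_trans inf_le_left inf_le_right)
            · refine le_trans inf_le_right ?_
              rw [horth]
      _ ≤ neg (neg (a ⊓ f)) := le_neg_neg _
    · calc neg (a ⊓ ((b ⊓ c) ⊔ (b ⊓ d))) ⊓ a ⊓ (c ⊔ e) ⊓ neg (neg f)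
          ≤ f := by rw [horth]; exact inf_le_right
      _ ≤ (a ⊓ c) ⊔ (a ⊓ e) ⊔ f := le_sup_right
    · rw [htop]; exact le_top
  · intro a b c d f
    refine le_inf (le_inf ?_ ?_) ?_
    · calc a ⊓ neg (neg f) = a ⊓ f := by rw [horth]
        _ ≤ neg (neg (a ⊓ f)) := le_neg_neg _
    · rw [horth]; exact inf_le_right
    · rw [htop]; exact le_top
end

section
/- Every Heyting lattice is an Ex-lattice; in fact every Heyting lattice satisfies the stronger inequality ¬(a ∧ ((b∧c) ∨ (b∧d))) ∧ a ∧ (c ∨ e) ∧ ¬¬f ≤ ¬¬(a ∧ f) ∧ ((a∧c) ∨ (a∧e)) ∧ ¬(b ∧ (c∨d)) for all a, b, c, d, e, f. -/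
open FNeg

theorem heyting_exAx {L : Type*} [DistribLattice L] [BoundedOrder L] [FNeg L]
    (hpc : ∀ a b : L, a ⊓ b = ⊥ → b ≤ neg a) :
    ExAx L ∧
      ∀ a b c d e f : L,
        neg (a ⊓ ((b ⊓ c) ⊔ (b ⊓ d))) ⊓ a ⊓ (c ⊔ e) ⊓ neg (neg f) ≤
          neg (neg (a ⊓ f)) ⊓ ((a ⊓ c) ⊔ (a ⊓ e)) ⊓ neg (b ⊓ (c ⊔ d)) := by
  have strong : ∀ a b c d e f : L,
      neg (a ⊓ ((b ⊓ c) ⊔ (b ⊓ d))) ⊓ a ⊓ (c ⊔ e) ⊓ neg (neg f) ≤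
        neg (neg (a ⊓ f)) ⊓ ((a ⊓ c) ⊔ (a ⊓ e)) ⊓ neg (b ⊓ (c ⊔ d)) := by
    intro a b c d e f
    set x := neg (a ⊓ ((b ⊓ c) ⊔ (b ⊓ d))) ⊓ a ⊓ (c ⊔ e) ⊓ neg (neg f) with hx
    have hxa : x ≤ a := le_trans inf_le_left (le_trans inf_le_left inf_le_right)
    have hxg : x ≤ neg (a ⊓ ((b ⊓ c) ⊔ (b ⊓ d))) :=
      le_trans inf_le_left (le_trans inf_le_left inf_le_left)
    have hxce : x ≤ c ⊔ e := le_trans inf_le_left inf_le_right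
    have hxf : x ≤ neg (neg f) := inf_le_right
    -- part 1 : x ≤ ¬¬(a ⊓ f)
    have h1 : a ⊓ neg (neg f) ≤ neg (neg (a ⊓ f)) := by
      have hB : neg (a ⊓ f) ⊓ a ≤ neg f := by
        apply hpc
        have : f ⊓ (neg (a ⊓ f) ⊓ a) ≤ (a ⊓ f) ⊓ neg (a ⊓ f) := by
          refine le_inf (le_inf ?_ inf_le_left) ?_
          · exact le_trans inf_le_right inf_le_right
          · exact le_trans inf_le_right inf_le_left
        rw [inf_neg] at this
        exact le_bot_iff.mp this
      apply hpc
      have : neg (a ⊓ f) ⊓ (a ⊓ neg (neg f)) ≤ neg f ⊓ neg (neg f) := by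
        refine le_inf ?_ (le_trans inf_le_right inf_le_right)
        exact le_trans (le_inf (le_inf inf_le_left
          (le_trans inf_le_right inf_le_left)) (le_trans inf_le_right inf_le_left)) (le_trans inf_le_left hB)
      rw [inf_neg] at this
      exact le_bot_iff.mp this
    have h1' : x ≤ neg (neg (a ⊓ f)) := le_trans (le_inf hxa hxf) h1
    -- part 2 : x ≤ (a ⊓ c) ⊔ (a ⊓ e)
    have h2 : x ≤ (a ⊓ c) ⊔ (a ⊓ e) := by
      have : x ≤ a ⊓ (c ⊔ e) := le_inf hxa hxce
      rw [inf_sup_left] at this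
      exact this
    -- part 3 : x ≤ ¬(b ⊓ (c ⊔ d))
    have h3 : x ≤ neg (b ⊓ (c ⊔ d)) := by
      refine le_trans (le_inf hxg hxa) (hpc _ _ ?_)
      have heq : a ⊓ (b ⊓ (c ⊔ d)) = a ⊓ ((b ⊓ c) ⊔ (b ⊓ d)) := by
        rw [inf_sup_left]
      have : (b ⊓ (c ⊔ d)) ⊓ (neg (a ⊓ ((b ⊓ c) ⊔ (b ⊓ d))) ⊓ a) ≤
          (a ⊓ ((b ⊓ c) ⊔ (b ⊓ d))) ⊓ neg (a ⊓ ((b ⊓ c) ⊔ (b ⊓ d))) := by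
        refine le_inf ?_ (le_trans inf_le_right inf_le_left)
        rw [← heq]
        exact le_inf (le_trans inf_le_right inf_le_right) inf_le_left
      rw [inf_neg] at this
      exact le_bot_iff.mp this
    exact le_inf (le_inf h1' h2) h3
  refine ⟨?_, strong⟩
  intro a b c d e f
  refine le_trans (strong a b c d e f) (le_inf (le_inf ?_ ?_) ?_)
  · exact le_trans inf_le_left inf_le_left
  · exact le_trans (le_trans inf_le_left inf_le_right) le_sup_left
  · exact le_trans inf_le_right le_sup_right
end

section
/- In any Ex-lattice, the inequality (Nu) holds: ¬¬p ∧ ¬¬q ≤ ¬¬(p ∧ q) for all p, q. -/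
open FNeg

theorem exAx_nuAx {L : Type*} [Lattice L] [BoundedOrder L] [FNeg L] (hex : ExAx L) :
    NuAx L := by
  have hnegtop : (neg (⊤ : L)) = ⊥ := by
    have := inf_neg (⊤ : L); simpa using this
  have hnegbot : (neg (⊥ : L)) = ⊤ := by
    have := le_neg_neg (⊤ : L)
    rw [hnegtop] at this
    exact le_antisymm le_top this
  -- key lemma: a ⊓ ¬¬f ≤ ¬¬(a ⊓ f)
  have star : ∀ a f : L, a ⊓ neg (neg f) ≤ neg (neg (a ⊓ f)) := by
    intro a f
    have h := hex a ⊥ ⊤ ⊥ ⊤ f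
    simp only [bot_inf_eq, sup_idem, inf_bot_eq, hnegbot, top_inf_eq, sup_top_eq,
      inf_top_eq] at h
    exact le_trans h inf_le_left
  -- ¬¬¬x = ¬x
  have triple : ∀ x : L, neg (neg (neg x)) = neg x := fun x =>
    le_antisymm (neg_antitone _ _ (le_neg_neg x)) (le_neg_neg (neg x))
  intro p q
  have h1 : neg (neg p) ⊓ neg (neg q) ≤ neg (neg (neg (neg p) ⊓ q)) := star _ q
  have h2 : neg (neg p) ⊓ q ≤ neg (neg (q ⊓ p)) := by
    have := star q p
    calc neg (neg p) ⊓ q = q ⊓ neg (neg p) := inf_comm _ _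
      _ ≤ neg (neg (q ⊓ p)) := this
  have h3 : neg (neg (neg (neg p) ⊓ q)) ≤ neg (neg (neg (neg (q ⊓ p)))) :=
    neg_antitone _ _ (neg_antitone _ _ h2)
  rw [triple (neg (q ⊓ p))] at h3
  calc neg (neg p) ⊓ neg (neg q) ≤ neg (neg (neg (neg p) ⊓ q)) := h1
    _ ≤ neg (neg (q ⊓ p)) := h3
    _ = neg (neg (p ⊓ q)) := by rw [inf_comm q p]
end

section
/- In any Ex-lattice, the inequality (Vi) holds: a ∧ (c ∨ e) ∧ ¬¬f ≤ (a ∧ c) ∨ (a ∧ e) ∨ f for all a, c, e, f. -/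
open FNeg

theorem exAx_viAx {L : Type*} [Lattice L] [BoundedOrder L] [FNeg L] (hex : ExAx L) :
    ViAx L := by
  intro a c e f
  have hbot : (⊤ : L) ≤ neg ⊥ :=
    le_trans (le_neg_neg ⊤) (neg_antitone ⊥ (neg ⊤) bot_le)
  have h := hex a ⊥ c ⊥ e f
  calc a ⊓ (c ⊔ e) ⊓ neg (neg f)
      ≤ neg (a ⊓ ((⊥ ⊓ c) ⊔ (⊥ ⊓ ⊥))) ⊓ a ⊓ (c ⊔ e) ⊓ neg (neg f) := by
        simp only [bot_inf_eq, sup_idem, inf_bot_eq]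
        exact le_inf (le_inf (le_inf (le_trans le_top hbot) (inf_le_left.trans inf_le_left))
          (inf_le_left.trans inf_le_right)) inf_le_right
    _ ≤ neg (neg (a ⊓ f)) ⊓ ((a ⊓ c) ⊔ (a ⊓ e) ⊔ f) ⊓ ((⊥ ⊓ (c ⊔ ⊥)) ⊔ neg (⊥ ⊓ (c ⊔ ⊥))) := h
    _ ≤ (a ⊓ c) ⊔ (a ⊓ e) ⊔ f := inf_le_left.trans inf_le_right
end

section
/- In any Ex-lattice, the inequality (Cl) holds: ¬(a ∧ ((b ∧ c) ∨ (b ∧ d))) ∧ a ≤ (b ∧ (c ∨ d)) ∨ ¬(b ∧ (c ∨ d)) for all a, b, c, d. -/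
open FNeg

theorem exAx_clAx {L : Type*} [Lattice L] [BoundedOrder L] [FNeg L] (hex : ExAx L) :
    ClAx L := by
  intro a b c d
  have h := hex a b c d ⊤ ⊤
  calc neg (a ⊓ ((b ⊓ c) ⊔ (b ⊓ d))) ⊓ a
      = neg (a ⊓ ((b ⊓ c) ⊔ (b ⊓ d))) ⊓ a ⊓ (c ⊔ ⊤) ⊓ neg (neg ⊤) := by
        rw [sup_top_eq, top_le_iff.mp (le_neg_neg (⊤ : L))]; simp
    _ ≤ _ := h.trans (inf_le_right)
end

section
/- Let L be an Ex-lattice. The relation a ∼ b defined by ¬a = ¬b is a congruence relation on L with respect to ∧, ∨, and ¬; that is, it is an equivalence relation, a ∼ b implies ¬¬a ∼ ¬¬b, and a ∼ a′ together with b ∼ b′ implies a ∨ b ∼ a′ ∨ b′ and a ∧ b ∼ a′ ∧ b′. -/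
open FNeg

section Aux
variable {L : Type*} [Lattice L] [BoundedOrder L] [FNeg L]

lemma my_neg_bot : (neg (⊥ : L) : L) = ⊤ := by
  refine le_antisymm le_top ?_
  exact le_trans (le_neg_neg ⊤) (neg_antitone _ _ bot_le)

lemma my_key (hex : ExAx L) (a f : L) : a ⊓ neg (neg f) ≤ neg (neg (a ⊓ f)) := by
  have h := hex a ⊥ ⊤ ⊤ ⊤ f
  simp only [bot_inf_eq, sup_idem, inf_bot_eq, my_neg_bot, top_inf_eq, sup_top_eq, inf_top_eq] at h
  exact le_trans h inf_le_left

lemma my_nu (hex : ExAx L) (p q : L) :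
    neg (neg p) ⊓ neg (neg q) ≤ neg (neg (p ⊓ q)) := by
  have h1 : neg (neg p) ⊓ neg (neg q) ≤ neg (neg (neg (neg p) ⊓ q)) := my_key hex _ _
  have h2 : neg (neg p) ⊓ q ≤ neg (neg (q ⊓ p)) := by
    calc neg (neg p) ⊓ q = q ⊓ neg (neg p) := inf_comm _ _
      _ ≤ neg (neg (q ⊓ p)) := my_key hex _ _
  have h3 : neg (neg (neg (neg p) ⊓ q)) ≤ neg (neg (neg (neg (q ⊓ p)))) :=
    neg_antitone _ _ (neg_antitone _ _ h2)
  have h4 : neg (neg (neg (neg (q ⊓ p)))) ≤ neg (neg (q ⊓ p)) :=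
    neg_antitone _ _ (le_neg_neg _)
  calc neg (neg p) ⊓ neg (neg q) ≤ neg (neg (q ⊓ p)) := le_trans h1 (le_trans h3 h4)
    _ = neg (neg (p ⊓ q)) := by rw [inf_comm]

lemma my_demorgan (a b : L) : neg (a ⊔ b) = neg a ⊓ neg b := by
  refine le_antisymm (le_inf (neg_antitone _ _ le_sup_left) (neg_antitone _ _ le_sup_right)) ?_
  have h : a ⊔ b ≤ neg (neg a ⊓ neg b) :=
    sup_le (le_trans (le_neg_neg a) (neg_antitone _ _ inf_le_left))
      (le_trans (le_neg_neg b) (neg_antitone _ _ inf_le_right))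
  exact le_trans (le_neg_neg _) (neg_antitone _ _ h)

lemma my_inf (hex : ExAx L) (a b : L) :
    neg (a ⊓ b) = neg (neg (neg a) ⊓ neg (neg b)) := by
  refine le_antisymm ?_ ?_
  · exact le_trans (le_neg_neg _) (neg_antitone _ _ (my_nu hex a b))
  · exact neg_antitone _ _ (le_inf (le_trans inf_le_left (le_neg_neg a))
      (le_trans inf_le_right (le_neg_neg b)))

end Aux

theorem sim_congruence {L : Type*} [Lattice L] [BoundedOrder L] [FNeg L] (hex : ExAx L) :
    Equivalence (fun a b : L => neg a = neg b) ∧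
    (∀ a b : L, neg a = neg b → neg (neg (neg a)) = neg (neg (neg b))) ∧
    (∀ a a' b b' : L, neg a = neg a' → neg b = neg b' →
      neg (a ⊔ b) = neg (a' ⊔ b') ∧ neg (a ⊓ b) = neg (a' ⊓ b')) := by
  refine ⟨⟨fun a => rfl, fun h => h.symm, fun h1 h2 => h1.trans h2⟩, ?_, ?_⟩
  · intro a b h; rw [h]
  · intro a a' b b' ha hb
    constructor
    · rw [my_demorgan, my_demorgan, ha, hb]
    · rw [my_inf hex a b, my_inf hex a' b', ha, hb]
end

section
/- In any fundamental lattice satisfying (Nu), ¬(a ∧ b) = ¬¬(¬a ∨ ¬b) for all a, b. -/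
open FNeg

theorem neg_inf_eq {L : Type*} [Lattice L] [BoundedOrder L] [FNeg L] (hnu : NuAx L)
    (a b : L) : neg (a ⊓ b) = neg (neg (neg a ⊔ neg b)) := by
  apply le_antisymm
  · -- neg (a ⊓ b) ≤ neg (neg (neg a ⊔ neg b))
    have h1 : neg (neg a ⊔ neg b) ≤ neg (neg a) :=
      neg_antitone _ _ le_sup_left
    have h2 : neg (neg a ⊔ neg b) ≤ neg (neg b) :=
      neg_antitone _ _ le_sup_right
    have h3 : neg (neg a ⊔ neg b) ≤ neg (neg (a ⊓ b)) :=
      le_trans (le_inf h1 h2) (hnu a b)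
    have h4 : neg (neg (neg (a ⊓ b))) ≤ neg (neg (neg a ⊔ neg b)) :=
      neg_antitone _ _ h3
    exact le_trans (le_neg_neg _) h4
  · have h1 : neg a ⊔ neg b ≤ neg (a ⊓ b) :=
      sup_le (neg_antitone _ _ inf_le_left) (neg_antitone _ _ inf_le_right)
    have h2 : neg (neg (neg a ⊔ neg b)) ≤ neg (neg (neg (a ⊓ b))) :=
      neg_antitone _ _ (neg_antitone _ _ h1)
    exact le_trans h2 (neg_antitone _ _ (le_neg_neg _))
end

section
/- Let L be a fundamental lattice in which (Vi) holds. Suppose F is a proper filter on L and I is a proper ideal on L with F ∩ I = ∅, and suppose there exists a ∈ L with a ∈ I and ¬¬a ∈ F. Then there is a prime filter P on L with F ⊆ P and P ∩ I = ∅. -/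
open FNeg

/-- A proper filter. -/
structure IsFilter {L : Type*} [Lattice L] [BoundedOrder L] (F : Set L) : Prop where
  nonempty : F.Nonempty
  inf_mem : ∀ ⦃a b : L⦄, a ∈ F → b ∈ F → a ⊓ b ∈ F
  mem_of_le : ∀ ⦃a b : L⦄, a ∈ F → a ≤ b → b ∈ F
  bot_not_mem : ⊥ ∉ F

/-- A proper ideal. -/
structure IsIdeal {L : Type*} [Lattice L] [BoundedOrder L] (I : Set L) : Prop where
  nonempty : I.Nonempty
  sup_mem : ∀ ⦃a b : L⦄, a ∈ I → b ∈ I → a ⊔ b ∈ I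
  mem_of_ge : ∀ ⦃a b : L⦄, a ∈ I → b ≤ a → b ∈ I
  top_not_mem : ⊤ ∉ I

/-- A prime filter. -/
def IsPrimeFilter {L : Type*} [Lattice L] [BoundedOrder L] (P : Set L) : Prop :=
  IsFilter P ∧ ∀ a b : L, a ⊔ b ∈ P → a ∈ P ∨ b ∈ P

theorem prime_filter_separation {L : Type*} [Lattice L] [BoundedOrder L] [FNeg L]
    (hvi : ViAx L) (F I : Set L) (hF : IsFilter F) (hI : IsIdeal I)
    (hdisj : F ∩ I = ∅) (a : L) (haI : a ∈ I) (haF : neg (neg a) ∈ F) :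
    ∃ P : Set L, IsPrimeFilter P ∧ F ⊆ P ∧ P ∩ I = ∅ := by
  classical
  have hbotI : (⊥ : L) ∈ I := by
    obtain ⟨x, hx⟩ := hI.nonempty
    exact hI.mem_of_ge hx bot_le
  -- Zorn
  set S : Set (Set L) := {P | IsFilter P ∧ P ∩ I = ∅} with hS
  have hzorn : ∀ c ⊆ S, IsChain (· ⊆ ·) c → c.Nonempty → ∃ ub ∈ S, ∀ s ∈ c, s ⊆ ub := by
    intro c hcS hchain hne
    refine ⟨⋃₀ c, ⟨⟨?_, ?_, ?_, ?_⟩, ?_⟩, fun s hs => Set.subset_sUnion_of_mem hs⟩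
    · obtain ⟨s, hs⟩ := hne
      obtain ⟨x, hx⟩ := (hcS hs).1.nonempty
      exact ⟨x, s, hs, hx⟩
    · rintro x y ⟨s, hs, hx⟩ ⟨t, ht, hy⟩
      rcases hchain.total hs ht with h | h
      · exact ⟨t, ht, (hcS ht).1.inf_mem (h hx) hy⟩
      · exact ⟨s, hs, (hcS hs).1.inf_mem hx (h hy)⟩
    · rintro x y ⟨s, hs, hx⟩ hxy
      exact ⟨s, hs, (hcS hs).1.mem_of_le hx hxy⟩
    · rintro ⟨s, hs, hx⟩
      exact (hcS hs).1.bot_not_mem hx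
    · apply Set.eq_empty_iff_forall_notMem.2
      rintro x ⟨⟨s, hs, hx⟩, hxI⟩
      exact Set.eq_empty_iff_forall_notMem.1 (hcS hs).2 x ⟨hx, hxI⟩
  obtain ⟨P, hFP, hPS, hmax⟩ := zorn_subset_nonempty S hzorn F ⟨hF, hdisj⟩
  obtain ⟨hPfil, hPI⟩ := hPS
  have hPImem : ∀ x ∈ P, x ∉ I := fun x hx hxI =>
    Set.eq_empty_iff_forall_notMem.1 hPI x ⟨hx, hxI⟩
  refine ⟨P, ⟨hPfil, ?_⟩, hFP, hPI⟩
  -- prime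
  intro c e hce
  by_contra hnot
  push_neg at hnot
  obtain ⟨hc, he⟩ := hnot
  -- for each x ∉ P with x relevant, get p ∈ P with p ⊓ x ∈ I
  have key : ∀ x : L, x ∉ P → ∃ p ∈ P, p ⊓ x ∈ I := by
    intro x hx
    by_contra hk
    push_neg at hk
    set Q : Set L := {y | ∃ p ∈ P, p ⊓ x ≤ y} with hQ
    have hQS : Q ∈ S := by
      constructor
      · constructor
        · obtain ⟨p, hp⟩ := hPfil.nonempty
          exact ⟨p ⊓ x, p, hp, le_rfl⟩
        · rintro u v ⟨p, hp, hpu⟩ ⟨q, hq, hqv⟩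
          refine ⟨p ⊓ q, hPfil.inf_mem hp hq, ?_⟩
          refine le_inf (le_trans ?_ hpu) (le_trans ?_ hqv)
          · exact inf_le_inf_right x inf_le_left
          · exact inf_le_inf_right x inf_le_right
        · rintro u v ⟨p, hp, hpu⟩ huv
          exact ⟨p, hp, hpu.trans huv⟩
        · rintro ⟨p, hp, hpb⟩
          exact hk p hp (hI.mem_of_ge hbotI (le_bot_iff.1 hpb ▸ le_rfl))
      · apply Set.eq_empty_iff_forall_notMem.2
        rintro y ⟨⟨p, hp, hpy⟩, hyI⟩
        exact hk p hp (hI.mem_of_ge hyI hpy)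
    have hPQ : P ⊆ Q := fun y hy => ⟨y, hy, inf_le_left⟩
    have : Q = P := le_antisymm (hmax hQS hPQ) hPQ
    apply hx
    rw [← this]
    obtain ⟨p, hp⟩ := hPfil.nonempty
    exact ⟨p, hp, inf_le_right⟩
  obtain ⟨p₁, hp₁, hp₁I⟩ := key c hc
  obtain ⟨p₂, hp₂, hp₂I⟩ := key e he
  set p := p₁ ⊓ p₂ with hp
  have hpP : p ∈ P := hPfil.inf_mem hp₁ hp₂
  have h1 : p ⊓ c ∈ I := hI.mem_of_ge hp₁I (inf_le_inf_right c inf_le_left)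
  have h2 : p ⊓ e ∈ I := hI.mem_of_ge hp₂I (inf_le_inf_right e inf_le_right)
  have hlhs : p ⊓ (c ⊔ e) ⊓ neg (neg a) ∈ P :=
    hPfil.inf_mem (hPfil.inf_mem hpP hce) (hFP haF)
  have hrhs : (p ⊓ c) ⊔ (p ⊓ e) ⊔ a ∈ I := hI.sup_mem (hI.sup_mem h1 h2) haI
  exact hPImem _ (hPfil.mem_of_le hlhs (hvi p c e a)) (hI.mem_of_ge hrhs le_rfl)
end

section
/- Let L be a fundamental lattice in which (Cl) holds. Suppose P is a prime filter on L and ¬a ∉ P for some a ∈ L. Then there is a prime filter Q ⊇ P with a ∈ Q. -/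
open FNeg

theorem prime_filter_extension {L : Type*} [Lattice L] [BoundedOrder L] [FNeg L]
    (hcl : ClAx L) (P : Set L) (hP : IsPrimeFilter P) (a : L) (ha : neg a ∉ P) :
    ∃ Q : Set L, IsPrimeFilter Q ∧ P ⊆ Q ∧ a ∈ Q := by
  classical
  obtain ⟨hPf, hPp⟩ := hP
  have htopP : (⊤ : L) ∈ P := by
    obtain ⟨p, hp⟩ := hPf.nonempty
    exact hPf.mem_of_le hp le_top
  have hnegtop : neg (⊤ : L) = ⊥ := by
    have h1 := inf_neg (⊤ : L)
    rwa [top_inf_eq] at h1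
  have hnegbot : neg (⊥ : L) = ⊤ := by
    refine le_antisymm le_top ?_
    calc (⊤:L) ≤ neg (neg ⊤) := le_neg_neg ⊤
      _ = neg ⊥ := by rw [hnegtop]
  set F0 : Set L := {x | ∃ p ∈ P, p ⊓ a ≤ x} with hF0def
  have hPF0 : P ⊆ F0 := fun p hp => ⟨p, hp, inf_le_left⟩
  have haF0 : a ∈ F0 := ⟨⊤, htopP, by simp⟩
  have hF0proper : (⊥ : L) ∉ F0 := by
    rintro ⟨p, hp, hpa⟩
    have hpa' : p ⊓ a = ⊥ := le_bot_iff.mp hpa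
    have hcl' := hcl p a ⊤ ⊤
    have hlhs : p ≤ (a ⊓ (⊤ ⊔ ⊤)) ⊔ neg (a ⊓ (⊤ ⊔ ⊤)) := by
      calc p = neg (p ⊓ ((a ⊓ ⊤) ⊔ (a ⊓ ⊤))) ⊓ p := by
              simp [hpa', hnegbot]
        _ ≤ _ := hcl'
    have hlhs2 : p ≤ a ⊔ neg a := by simpa using hlhs
    rcases hPp a (neg a) (hPf.mem_of_le hp hlhs2) with h | h
    · exact hPf.bot_not_mem (hpa' ▸ hPf.inf_mem hp h)
    · exact ha h
  have hF0filt : IsFilter F0 := by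
    refine ⟨⟨a, haF0⟩, ?_, ?_, hF0proper⟩
    · rintro x y ⟨p, hp, hpx⟩ ⟨q, hq, hqy⟩
      exact ⟨p ⊓ q, hPf.inf_mem hp hq,
        le_inf (le_trans (inf_le_inf_right a inf_le_left) hpx)
               (le_trans (inf_le_inf_right a inf_le_right) hqy)⟩
    · rintro x y ⟨p, hp, hpx⟩ hxy
      exact ⟨p, hp, hpx.trans hxy⟩
  set S : Set (Set L) := {F | IsFilter F ∧ F0 ⊆ F} with hSdef
  have hF0S : F0 ∈ S := ⟨hF0filt, le_refl _⟩
  have hchain : ∀ c ⊆ S, IsChain (· ⊆ ·) c → c.Nonempty →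
      ∃ ub ∈ S, ∀ s ∈ c, s ⊆ ub := by
    intro c hcS hch ⟨F, hF⟩
    refine ⟨⋃₀ c, ⟨⟨?_, ?_, ?_, ?_⟩, ?_⟩, fun s hs => Set.subset_sUnion_of_mem hs⟩
    · obtain ⟨x, hx⟩ := (hcS hF).1.nonempty
      exact ⟨x, F, hF, hx⟩
    · rintro x y ⟨F1, hF1, hx⟩ ⟨F2, hF2, hy⟩
      rcases hch.total hF1 hF2 with h | h
      · exact ⟨F2, hF2, (hcS hF2).1.inf_mem (h hx) hy⟩
      · exact ⟨F1, hF1, (hcS hF1).1.inf_mem hx (h hy)⟩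
    · rintro x y ⟨F1, hF1, hx⟩ hxy
      exact ⟨F1, hF1, (hcS hF1).1.mem_of_le hx hxy⟩
    · rintro ⟨F1, hF1, hbot⟩
      exact (hcS hF1).1.bot_not_mem hbot
    · exact (hcS hF).2.trans (Set.subset_sUnion_of_mem hF)
  obtain ⟨Q, hF0Q, hQmax⟩ := zorn_subset_nonempty S hchain F0 hF0S
  obtain ⟨hQfilt, hF0Q'⟩ := hQmax.prop
  have hPQ : P ⊆ Q := hPF0.trans hF0Q'
  have htopQ : (⊤ : L) ∈ Q := hPQ htopP
  -- maximality: anything not in Q can be "killed" by some element of Q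
  have hext : ∀ z : L, z ∉ Q → ∃ f ∈ Q, f ⊓ z = ⊥ := by
    intro z hz
    by_contra h
    push_neg at h
    set G : Set L := {w | ∃ q ∈ Q, q ⊓ z ≤ w} with hGdef
    have hQG : Q ⊆ G := fun q hq => ⟨q, hq, inf_le_left⟩
    have hGfilt : IsFilter G := by
      refine ⟨⟨z, ⊤, htopQ, by simp⟩, ?_, ?_, ?_⟩
      · rintro x y ⟨p, hp, hpx⟩ ⟨q, hq, hqy⟩
        exact ⟨p ⊓ q, hQfilt.inf_mem hp hq,
          le_inf (le_trans (inf_le_inf_right z inf_le_left) hpx)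
                 (le_trans (inf_le_inf_right z inf_le_right) hqy)⟩
      · rintro x y ⟨p, hp, hpx⟩ hxy
        exact ⟨p, hp, hpx.trans hxy⟩
      · rintro ⟨q, hq, hqz⟩
        exact h q hq (le_bot_iff.mp hqz)
    have hGS : G ∈ S := ⟨hGfilt, hF0Q'.trans hQG⟩
    have : G ⊆ Q := hQmax.2 hGS hQG
    exact hz (this ⟨⊤, htopQ, by simp⟩)
  have hQprime : ∀ x y : L, x ⊔ y ∈ Q → x ∈ Q ∨ y ∈ Q := by
    intro x y hxy
    by_contra h
    push_neg at h
    obtain ⟨hx, hy⟩ := h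
    obtain ⟨f, hf, hfx⟩ := hext x hx
    obtain ⟨g, hg, hgy⟩ := hext y hy
    set hh := f ⊓ g with hhdef
    have hhQ : hh ∈ Q := hQfilt.inf_mem hf hg
    have hhx : hh ⊓ x = ⊥ :=
      le_bot_iff.mp (hfx ▸ inf_le_inf_right x (inf_le_left : hh ≤ f))
    have hhy : hh ⊓ y = ⊥ :=
      le_bot_iff.mp (hgy ▸ inf_le_inf_right y (inf_le_right : hh ≤ g))
    set k := hh ⊓ (x ⊔ y) with hkdef
    have hkQ : k ∈ Q := hQfilt.inf_mem hhQ hxy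
    have hkey : (⊤ : L) ≤ k ⊔ neg k := by
      have hcl' := hcl ⊤ hh x y
      calc (⊤ : L) = neg (⊤ ⊓ ((hh ⊓ x) ⊔ (hh ⊓ y))) ⊓ ⊤ := by
            simp [hhx, hhy, hnegbot]
        _ ≤ k ⊔ neg k := hcl'
    rcases hPp k (neg k) (hPf.mem_of_le htopP hkey) with hk | hk
    · have hxyP : x ⊔ y ∈ P := hPf.mem_of_le hk inf_le_right
      rcases hPp x y hxyP with h' | h'
      · exact hx (hPQ h')
      · exact hy (hPQ h')
    · have : (⊥ : L) ∈ Q := by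
        have := hQfilt.inf_mem hkQ (hPQ hk)
        rwa [inf_neg k] at this
      exact hQfilt.bot_not_mem this
  exact ⟨Q, ⟨hQfilt, hQprime⟩, hPQ, hF0Q haF0⟩
end

section
/- Let L be an Ex-lattice and let P(L) be the set of prime filters on L ordered by reverse inclusion, topologized so that open sets are the downward-closed (under ⊇) subsets, with negation ∼A defined as the set of prime filters Q such that no prime filter extending Q lies in A. Then the map a ↦ â = {P prime filter : a ∈ P} is a fundamental homomorphism from L into the lattice of open sets, and moreover, for any a, b ∈ L with a ≰ b and ¬a = ¬b, we have â ⊄ b̂. -/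
open FNeg

/-- The set of prime filters of L. -/
def PF (L : Type*) [Lattice L] [BoundedOrder L] : Type _ :=
  {P : Set L // IsPrimeFilter P}

/-- The map a ↦ â = the set of prime filters containing a. -/
def hat {L : Type*} [Lattice L] [BoundedOrder L] (a : L) : Set (PF L) :=
  {P : PF L | a ∈ P.1}

/-- The negation on sets of prime filters: ∼A is the set of prime filters Q such that
no prime filter extending Q lies in A. -/
def hneg {L : Type*} [Lattice L] [BoundedOrder L] (A : Set (PF L)) : Set (PF L) :=
  {Q : PF L | ∀ R : PF L, Q.1 ⊆ R.1 → R ∉ A}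

set_option linter.unusedSectionVars false

section Aux

variable {L : Type*} [Lattice L] [BoundedOrder L] [FNeg L]

private lemma fneg_top_eq : neg (⊤ : L) = ⊥ := by
  have h := inf_neg (⊤ : L)
  simpa using h

private lemma fneg_bot_eq : neg (⊥ : L) = ⊤ := by
  have h := le_neg_neg (⊤ : L)
  rw [fneg_top_eq] at h
  exact top_unique h

private lemma vi_of_ex (hex : ExAx L) : ViAx L := by
  intro a c e f
  have h := hex a ⊥ c ⊥ e f
  simp only [bot_inf_eq, sup_idem, inf_bot_eq, fneg_bot_eq, top_inf_eq, bot_sup_eq,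
    inf_top_eq] at h
  exact h.trans inf_le_right

private lemma cl_of_ex (hex : ExAx L) : ClAx L := by
  intro a b c d
  have h := hex a b c d ⊤ ⊤
  simp only [sup_top_eq, fneg_top_eq, fneg_bot_eq, inf_top_eq] at h
  exact h.trans inf_le_right

private lemma IsFilter.top_mem' {F : Set L} (hF : IsFilter F) : (⊤ : L) ∈ F := by
  obtain ⟨x, hx⟩ := hF.nonempty
  exact hF.mem_of_le hx le_top

private lemma IsIdeal.bot_mem' {I : Set L} (hI : IsIdeal I) : (⊥ : L) ∈ I := by
  obtain ⟨x, hx⟩ := hI.nonempty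
  exact hI.mem_of_ge hx bot_le

/-- Prime extension avoiding an element `b` with `¬¬b` in the filter. Uses (Vi). -/
private lemma exists_prime_avoiding (hVi : ViAx L) {F0 : Set L} (hF0 : IsFilter F0)
    {b : L} (hb : b ∉ F0) (hnnb : neg (neg b) ∈ F0) :
    ∃ R : Set L, IsPrimeFilter R ∧ F0 ⊆ R ∧ b ∉ R := by
  set S : Set (Set L) := {F | IsFilter F ∧ F0 ⊆ F ∧ b ∉ F} with hS
  have hchain : ∀ c ⊆ S, IsChain (· ⊆ ·) c → c.Nonempty →
      ∃ ub ∈ S, ∀ s ∈ c, s ⊆ ub := by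
    intro c hc hch ⟨F1, hF1⟩
    refine ⟨⋃₀ c, ⟨⟨?_, ?_, ?_, ?_⟩, ?_, ?_⟩, fun s hs => Set.subset_sUnion_of_mem hs⟩
    · obtain ⟨x, hx⟩ := (hc hF1).1.nonempty
      exact ⟨x, F1, hF1, hx⟩
    · rintro x y ⟨Fx, hFx, hxF⟩ ⟨Fy, hFy, hyF⟩
      rcases eq_or_ne Fx Fy with rfl | hne
      · exact ⟨Fx, hFx, (hc hFx).1.inf_mem hxF hyF⟩
      · rcases hch hFx hFy hne with hsub | hsub
        · exact ⟨Fy, hFy, (hc hFy).1.inf_mem (hsub hxF) hyF⟩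
        · exact ⟨Fx, hFx, (hc hFx).1.inf_mem hxF (hsub hyF)⟩
    · rintro x y ⟨Fx, hFx, hxF⟩ hxy
      exact ⟨Fx, hFx, (hc hFx).1.mem_of_le hxF hxy⟩
    · rintro ⟨Fx, hFx, hbot⟩
      exact (hc hFx).1.bot_not_mem hbot
    · exact fun x hx => ⟨F1, hF1, (hc hF1).2.1 hx⟩
    · rintro ⟨Fx, hFx, hbF⟩
      exact (hc hFx).2.2 hbF
  obtain ⟨M, hF0M, hMmax⟩ := zorn_subset_nonempty S hchain F0 ⟨hF0, subset_rfl, hb⟩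
  obtain ⟨hMfil, hF0M', hbM⟩ := hMmax.prop
  have key : ∀ x : L, x ∉ M → ∃ p ∈ M, p ⊓ x ≤ b := by
    intro x hx
    by_contra hcon
    push_neg at hcon
    set Mx : Set L := {y | ∃ p ∈ M, p ⊓ x ≤ y} with hMx
    have hMxS : Mx ∈ S := by
      refine ⟨⟨⟨x, ⊤, hMfil.top_mem', by simp⟩, ?_, ?_, ?_⟩, ?_, ?_⟩
      · rintro y z ⟨p, hp, hpy⟩ ⟨q, hq, hqz⟩
        exact ⟨p ⊓ q, hMfil.inf_mem hp hq,
          le_inf ((inf_le_inf_right x inf_le_left).trans hpy)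
            ((inf_le_inf_right x inf_le_right).trans hqz)⟩
      · rintro y z ⟨p, hp, hpy⟩ hyz
        exact ⟨p, hp, hpy.trans hyz⟩
      · rintro ⟨p, hp, hpbot⟩
        exact hcon p hp (hpbot.trans bot_le)
      · exact fun y hy => ⟨y, hF0M' hy, inf_le_left⟩
      · rintro ⟨p, hp, hpb⟩
        exact hcon p hp hpb
    have hsub : M ⊆ Mx := fun y hy => ⟨y, hy, inf_le_left⟩
    have : Mx ⊆ M := hMmax.2 hMxS hsub
    exact hx (this ⟨⊤, hMfil.top_mem', by simp⟩)
  refine ⟨M, ⟨hMfil, ?_⟩, hF0M, hbM⟩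
  intro c e hce
  by_contra hne
  push_neg at hne
  obtain ⟨p, hp, hpc⟩ := key c hne.1
  obtain ⟨q, hq, hqe⟩ := key e hne.2
  have hA : (p ⊓ q) ⊓ (c ⊔ e) ⊓ neg (neg b) ∈ M :=
    hMfil.inf_mem (hMfil.inf_mem (hMfil.inf_mem hp hq) hce) (hF0M' hnnb)
  have hle : (p ⊓ q) ⊓ (c ⊔ e) ⊓ neg (neg b) ≤ b := by
    refine (hVi (p ⊓ q) c e b).trans ?_
    refine sup_le (sup_le ?_ ?_) le_rfl
    · exact ((inf_le_inf_right c inf_le_left).trans hpc)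
    · exact ((inf_le_inf_right e inf_le_right).trans hqe)
  exact hbM (hMfil.mem_of_le hA hle)

end Aux

section PairZorn

variable {L : Type*} [Lattice L] [BoundedOrder L] [FNeg L]

private def pairF (S : Set (Bool × L)) : Set L := {x | (true, x) ∈ S}
private def pairI (S : Set (Bool × L)) : Set L := {x | (false, x) ∈ S}

private def GoodPair (G : Set L) (S : Set (Bool × L)) : Prop :=
  IsFilter (pairF S) ∧ IsIdeal (pairI S) ∧ G ⊆ pairF S ∧
  (∀ x : L, x ∈ pairF S → x ∈ pairI S → False) ∧
  (∀ z ∈ pairI S, ∃ w ∈ pairF S, w ⊓ z = ⊥)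

private lemma pairF_union (S : Set (Bool × L)) (T : Set L) :
    pairF (S ∪ (fun y => ((true : Bool), y)) '' T) = pairF S ∪ T := by
  ext x
  constructor
  · rintro (h | ⟨y, hy, hEq⟩)
    · exact Or.inl h
    · cases hEq; exact Or.inr hy
  · rintro (h | h)
    · exact Or.inl h
    · exact Or.inr ⟨x, h, rfl⟩

private lemma pairI_union_t (S : Set (Bool × L)) (T : Set L) :
    pairI (S ∪ (fun y => ((true : Bool), y)) '' T) = pairI S := by
  ext x
  constructor
  · rintro (h | ⟨y, hy, hEq⟩)
    · exact h
    · exact absurd (congrArg Prod.fst hEq) (by simp)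
  · exact fun h => Or.inl h

private lemma pairF_union_f (S : Set (Bool × L)) (T : Set L) :
    pairF (S ∪ (fun y => ((false : Bool), y)) '' T) = pairF S := by
  ext x
  constructor
  · rintro (h | ⟨y, hy, hEq⟩)
    · exact h
    · exact absurd (congrArg Prod.fst hEq) (by simp)
  · exact fun h => Or.inl h

private lemma pairI_union (S : Set (Bool × L)) (T : Set L) :
    pairI (S ∪ (fun y => ((false : Bool), y)) '' T) = pairI S ∪ T := by
  ext x
  constructor
  · rintro (h | ⟨y, hy, hEq⟩)
    · exact Or.inl h
    · cases hEq; exact Or.inr hy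
  · rintro (h | h)
    · exact Or.inl h
    · exact Or.inr ⟨x, h, rfl⟩

/-- Prime extension above a prime filter: if `Q` is prime and `¬a ∉ Q`, `a ∉ Q`, then
there is a prime filter containing `Q` and `a`. Uses (Cl). -/
private lemma prime_extension_above (hCl : ClAx L) {Q : Set L} (hQ : IsPrimeFilter Q)
    {a : L} (hna : neg a ∉ Q) (haQ : a ∉ Q) :
    ∃ R : Set L, IsPrimeFilter R ∧ Q ⊆ R ∧ a ∈ R := by
  have hQtop : (⊤ : L) ∈ Q := hQ.1.top_mem'
  -- the filter generated by Q ∪ {a}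
  set G : Set L := {y | ∃ q ∈ Q, q ⊓ a ≤ y} with hG
  have hq_ne_bot : ∀ q ∈ Q, ¬ q ⊓ a ≤ ⊥ := by
    intro q hq hqa
    have hqa' : q ⊓ a = ⊥ := le_bot_iff.mp hqa
    have hcl := hCl q ⊤ a ⊥
    simp only [top_inf_eq, sup_bot_eq] at hcl
    rw [hqa', fneg_bot_eq, top_inf_eq] at hcl
    have : a ⊔ neg a ∈ Q := hQ.1.mem_of_le hq hcl
    rcases hQ.2 a (neg a) this with h | h
    · exact haQ h
    · exact hna h
  have hGfil : IsFilter G := by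
    refine ⟨⟨⊤, ⊤, hQtop, le_top⟩, ?_, ?_, ?_⟩
    · rintro y z ⟨q, hq, hqy⟩ ⟨r, hr, hrz⟩
      exact ⟨q ⊓ r, hQ.1.inf_mem hq hr,
        le_inf ((inf_le_inf_right a inf_le_left).trans hqy)
          ((inf_le_inf_right a inf_le_right).trans hrz)⟩
    · rintro y z ⟨q, hq, hqy⟩ hyz
      exact ⟨q, hq, hqy.trans hyz⟩
    · rintro ⟨q, hq, hqbot⟩
      exact hq_ne_bot q hq hqbot
  have hQG : Q ⊆ G := fun q hq => ⟨q, hq, inf_le_left⟩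
  have haG : a ∈ G := ⟨⊤, hQtop, by simp⟩
  -- Zorn over good pairs
  set S : Set (Set (Bool × L)) := {T | GoodPair G T} with hSdef
  have hbt : (⊥ : L) ≠ ⊤ := by
    intro h
    exact hQ.1.bot_not_mem (h ▸ hQtop)
  have hS0 : ((fun y => ((true : Bool), y)) '' G ∪ {((false : Bool), (⊥ : L))}) ∈ S := by
    have hF : pairF ((fun y => ((true : Bool), y)) '' G ∪ {((false : Bool), (⊥ : L))}) = G := by
      ext x
      constructor
      · rintro (⟨y, hy, hEq⟩ | h)
        · cases hEq; exact hy
        · exact absurd (congrArg Prod.fst h) (by simp)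
      · exact fun h => Or.inl ⟨x, h, rfl⟩
    have hI : pairI ((fun y => ((true : Bool), y)) '' G ∪ {((false : Bool), (⊥ : L))}) =
        {⊥} := by
      ext x
      constructor
      · rintro (⟨y, hy, hEq⟩ | h)
        · exact absurd (congrArg Prod.fst hEq) (by simp)
        · simpa using congrArg Prod.snd h
      · intro h
        rw [Set.mem_singleton_iff] at h
        right
        simp [h]
    have hIdeal : IsIdeal ({⊥} : Set L) := by
      refine ⟨⟨⊥, rfl⟩, ?_, ?_, ?_⟩
      · intro x y hx hy
        rw [Set.mem_singleton_iff] at hx hy ⊢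
        rw [hx, hy, sup_idem]
      · intro x y hx hy
        rw [Set.mem_singleton_iff] at hx ⊢
        rw [hx] at hy
        exact le_bot_iff.mp hy
      · intro h
        rw [Set.mem_singleton_iff] at h
        exact hbt h.symm
    refine ⟨by rw [hF]; exact hGfil, by rw [hI]; exact hIdeal, by rw [hF], ?_, ?_⟩
    · intro x hx hxI
      rw [hF] at hx
      rw [hI] at hxI
      rw [Set.mem_singleton_iff.mp hxI] at hx
      exact hGfil.bot_not_mem hx
    · intro z hz
      rw [hI] at hz
      rw [Set.mem_singleton_iff.mp hz]
      exact ⟨⊤, by rw [hF]; exact hQG hQtop, by simp⟩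
  have hchain : ∀ c ⊆ S, IsChain (· ⊆ ·) c → c.Nonempty →
      ∃ ub ∈ S, ∀ s ∈ c, s ⊆ ub := by
    intro c hc hch ⟨T1, hT1⟩
    have hmemF : ∀ x : L, x ∈ pairF (⋃₀ c) ↔ ∃ T ∈ c, x ∈ pairF T := by
      intro x; exact Set.mem_sUnion
    have hmemI : ∀ x : L, x ∈ pairI (⋃₀ c) ↔ ∃ T ∈ c, x ∈ pairI T := by
      intro x; exact Set.mem_sUnion
    have pick2 : ∀ {T T' : Set (Bool × L)}, T ∈ c → T' ∈ c →
        ∃ T'' ∈ c, T ⊆ T'' ∧ T' ⊆ T'' := by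
      intro T T' hT hT'
      rcases eq_or_ne T T' with rfl | hne
      · exact ⟨T, hT, subset_rfl, subset_rfl⟩
      · rcases hch hT hT' hne with h | h
        · exact ⟨T', hT', h, subset_rfl⟩
        · exact ⟨T, hT, subset_rfl, h⟩
    refine ⟨⋃₀ c, ⟨⟨?_, ?_, ?_, ?_⟩, ⟨?_, ?_, ?_, ?_⟩, ?_, ?_, ?_⟩,
      fun s hs => Set.subset_sUnion_of_mem hs⟩
    · obtain ⟨x, hx⟩ := (hc hT1).1.nonempty
      exact ⟨x, (hmemF x).mpr ⟨T1, hT1, hx⟩⟩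
    · intro x y hx hy
      obtain ⟨Tx, hTx, hxT⟩ := (hmemF x).mp hx
      obtain ⟨Ty, hTy, hyT⟩ := (hmemF y).mp hy
      obtain ⟨T, hT, h1, h2⟩ := pick2 hTx hTy
      exact (hmemF _).mpr ⟨T, hT, (hc hT).1.inf_mem (h1 hxT) (h2 hyT)⟩
    · intro x y hx hxy
      obtain ⟨Tx, hTx, hxT⟩ := (hmemF x).mp hx
      exact (hmemF y).mpr ⟨Tx, hTx, (hc hTx).1.mem_of_le hxT hxy⟩
    · intro h
      obtain ⟨Tx, hTx, hxT⟩ := (hmemF ⊥).mp h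
      exact (hc hTx).1.bot_not_mem hxT
    · obtain ⟨x, hx⟩ := (hc hT1).2.1.nonempty
      exact ⟨x, (hmemI x).mpr ⟨T1, hT1, hx⟩⟩
    · intro x y hx hy
      obtain ⟨Tx, hTx, hxT⟩ := (hmemI x).mp hx
      obtain ⟨Ty, hTy, hyT⟩ := (hmemI y).mp hy
      obtain ⟨T, hT, h1, h2⟩ := pick2 hTx hTy
      exact (hmemI _).mpr ⟨T, hT, (hc hT).2.1.sup_mem (h1 hxT) (h2 hyT)⟩
    · intro x y hx hxy
      obtain ⟨Tx, hTx, hxT⟩ := (hmemI x).mp hx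
      exact (hmemI y).mpr ⟨Tx, hTx, (hc hTx).2.1.mem_of_ge hxT hxy⟩
    · intro h
      obtain ⟨Tx, hTx, hxT⟩ := (hmemI ⊤).mp h
      exact (hc hTx).2.1.top_not_mem hxT
    · intro x hx
      exact (hmemF x).mpr ⟨T1, hT1, (hc hT1).2.2.1 hx⟩
    · intro x hx hxI
      obtain ⟨Tx, hTx, hxT⟩ := (hmemF x).mp hx
      obtain ⟨Ty, hTy, hyT⟩ := (hmemI x).mp hxI
      obtain ⟨T, hT, h1, h2⟩ := pick2 hTx hTy
      exact (hc hT).2.2.2.1 x (h1 hxT) (h2 hyT)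
    · intro z hz
      obtain ⟨Tz, hTz, hzT⟩ := (hmemI z).mp hz
      obtain ⟨w, hw, hwz⟩ := (hc hTz).2.2.2.2 z hzT
      exact ⟨w, (hmemF w).mpr ⟨Tz, hTz, hw⟩, hwz⟩
  obtain ⟨M, _, hMmax⟩ := zorn_subset_nonempty S hchain _ hS0
  obtain ⟨hMF, hMI, hGM, hMdisj, hMann⟩ := hMmax.prop
  set F : Set L := pairF M with hFdef
  set I : Set L := pairI M with hIdef
  have hQF : Q ⊆ F := fun q hq => hGM (hQG hq)
  have htopF : (⊤ : L) ∈ F := hMF.top_mem'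
  have hbotI : (⊥ : L) ∈ I := hMI.bot_mem'
  -- totality of the maximal pair
  have htotal : ∀ x : L, x ∈ F ∨ x ∈ I := by
    intro x
    by_contra hcon
    push_neg at hcon
    obtain ⟨hxF, hxI⟩ := hcon
    -- Step 1: some p ∈ F with p ⊓ x ∈ I
    have step1 : ∃ p ∈ F, p ⊓ x ∈ I := by
      by_contra h1
      push_neg at h1
      set Fx : Set L := {y | ∃ p ∈ F, p ⊓ x ≤ y} with hFx
      set M' : Set (Bool × L) := M ∪ (fun y => ((true : Bool), y)) '' Fx with hM'
      have hFM' : pairF M' = F ∪ Fx := pairF_union M Fx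
      have hIM' : pairI M' = I := pairI_union_t M Fx
      have hFsubFx : F ⊆ Fx := fun p hp => ⟨p, hp, inf_le_left⟩
      have hFM'' : pairF M' = Fx := by
        rw [hFM']; exact Set.union_eq_self_of_subset_left hFsubFx
      have hM'S : M' ∈ S := by
        refine ⟨?_, ?_, ?_, ?_, ?_⟩
        · rw [hFM'']
          refine ⟨⟨x, ⊤, htopF, by simp⟩, ?_, ?_, ?_⟩
          · rintro y z ⟨p, hp, hpy⟩ ⟨q, hq, hqz⟩
            exact ⟨p ⊓ q, hMF.inf_mem hp hq,
              le_inf ((inf_le_inf_right x inf_le_left).trans hpy)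
                ((inf_le_inf_right x inf_le_right).trans hqz)⟩
          · rintro y z ⟨p, hp, hpy⟩ hyz
            exact ⟨p, hp, hpy.trans hyz⟩
          · rintro ⟨p, hp, hpbot⟩
            have hbb : p ⊓ x = ⊥ := le_bot_iff.mp hpbot
            exact h1 p hp (hbb ▸ hbotI)
        · rw [hIM']; exact hMI
        · rw [hFM'']; exact fun y hy => hFsubFx (hGM hy)
        · intro y hy hyI
          rw [hFM''] at hy
          rw [hIM'] at hyI
          obtain ⟨p, hp, hpy⟩ := hy
          exact h1 p hp (hMI.mem_of_ge hyI hpy)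
        · intro z hz
          rw [hIM'] at hz
          obtain ⟨w, hw, hwz⟩ := hMann z hz
          rw [hFM'']
          exact ⟨w, hFsubFx hw, hwz⟩
      have heq : M' ⊆ M := hMmax.2 hM'S Set.subset_union_left
      have : x ∈ F := by
        have hmem : ((true : Bool), x) ∈ M' := by
          right; exact ⟨x, ⟨⊤, htopF, by simp⟩, rfl⟩
        exact heq hmem
      exact hxF this
    obtain ⟨p, hpF, hpxI⟩ := step1
    obtain ⟨w₀, hw₀F, hw₀⟩ := hMann _ hpxI
    -- Step 2: some i ∈ I with i ⊔ x ∈ F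
    have step2 : ∃ i ∈ I, i ⊔ x ∈ F := by
      by_contra h3
      push_neg at h3
      -- first, annihilators for all i ⊔ x
      have sub : ∀ i ∈ I, ∃ w ∈ F, w ⊓ (i ⊔ x) = ⊥ := by
        intro i hi
        by_contra h4
        push_neg at h4
        set F' : Set L := {y | ∃ p ∈ F, p ⊓ (i ⊔ x) ≤ y} with hF'
        set M' : Set (Bool × L) := M ∪ (fun y => ((true : Bool), y)) '' F' with hM'
        have hFM' : pairF M' = F ∪ F' := pairF_union M F'
        have hIM' : pairI M' = I := pairI_union_t M F'
        have hFsubF' : F ⊆ F' := fun q hq => ⟨q, hq, inf_le_left⟩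
        have hFM'' : pairF M' = F' := by
          rw [hFM']; exact Set.union_eq_self_of_subset_left hFsubF'
        have hM'S : M' ∈ S := by
          refine ⟨?_, ?_, ?_, ?_, ?_⟩
          · rw [hFM'']
            refine ⟨⟨i ⊔ x, ⊤, htopF, by simp⟩, ?_, ?_, ?_⟩
            · rintro y z ⟨q, hq, hqy⟩ ⟨r, hr, hrz⟩
              exact ⟨q ⊓ r, hMF.inf_mem hq hr,
                le_inf ((inf_le_inf_right _ inf_le_left).trans hqy)
                  ((inf_le_inf_right _ inf_le_right).trans hrz)⟩
            · rintro y z ⟨q, hq, hqy⟩ hyz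
              exact ⟨q, hq, hqy.trans hyz⟩
            · rintro ⟨q, hq, hqbot⟩
              exact h4 q hq (le_bot_iff.mp hqbot)
          · rw [hIM']; exact hMI
          · rw [hFM'']; exact fun y hy => hFsubF' (hGM hy)
          · intro y hy hyI
            rw [hFM''] at hy
            rw [hIM'] at hyI
            obtain ⟨q, hq, hqy⟩ := hy
            have hz' : q ⊓ (i ⊔ x) ∈ I := hMI.mem_of_ge hyI hqy
            obtain ⟨w, hwF, hwz⟩ := hMann _ hz'
            refine h4 (w ⊓ q) (hMF.inf_mem hwF hq) ?_
            calc w ⊓ q ⊓ (i ⊔ x) = w ⊓ (q ⊓ (i ⊔ x)) := by rw [inf_assoc]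
              _ = ⊥ := hwz
          · intro z hz
            rw [hIM'] at hz
            obtain ⟨w, hw, hwz⟩ := hMann z hz
            rw [hFM'']
            exact ⟨w, hFsubF' hw, hwz⟩
        have heq : M' ⊆ M := hMmax.2 hM'S Set.subset_union_left
        have : i ⊔ x ∈ F := by
          have hmem : ((true : Bool), i ⊔ x) ∈ M' := by
            right; exact ⟨i ⊔ x, ⟨⊤, htopF, by simp⟩, rfl⟩
          exact heq hmem
        exact h3 i hi this
      -- now grow the ideal by x
      set Ix : Set L := {z | ∃ i ∈ I, z ≤ i ⊔ x} with hIx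
      set M' : Set (Bool × L) := M ∪ (fun y => ((false : Bool), y)) '' Ix with hM'
      have hFM' : pairF M' = F := pairF_union_f M Ix
      have hIM' : pairI M' = I ∪ Ix := pairI_union M Ix
      have hIsubIx : I ⊆ Ix := fun i hi => ⟨i, hi, le_sup_left⟩
      have hIM'' : pairI M' = Ix := by
        rw [hIM']; exact Set.union_eq_self_of_subset_left hIsubIx
      have hM'S : M' ∈ S := by
        refine ⟨?_, ?_, ?_, ?_, ?_⟩
        · rw [hFM']; exact hMF
        · rw [hIM'']
          refine ⟨⟨x, ⊥, hbotI, by simp⟩, ?_, ?_, ?_⟩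
          · rintro y z ⟨i, hi, hiy⟩ ⟨j, hj, hjz⟩
            refine ⟨i ⊔ j, hMI.sup_mem hi hj, sup_le ?_ ?_⟩
            · exact hiy.trans (sup_le_sup_right le_sup_left x)
            · exact hjz.trans (sup_le_sup_right le_sup_right x)
          · rintro y z ⟨i, hi, hiy⟩ hyz
            exact ⟨i, hi, hyz.trans hiy⟩
          · rintro ⟨i, hi, hitop⟩
            have htt : i ⊔ x = ⊤ := top_unique hitop
            exact h3 i hi (htt ▸ htopF)
        · rw [hFM']; exact hGM
        · intro y hy hyI
          rw [hFM'] at hy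
          rw [hIM''] at hyI
          obtain ⟨i, hi, hiy⟩ := hyI
          exact h3 i hi (hMF.mem_of_le hy hiy)
        · intro z hz
          rw [hIM''] at hz
          obtain ⟨i, hi, hiz⟩ := hz
          obtain ⟨w, hwF, hwz⟩ := sub i hi
          rw [hFM']
          refine ⟨w, hwF, le_bot_iff.mp ?_⟩
          calc w ⊓ z ≤ w ⊓ (i ⊔ x) := inf_le_inf_left w hiz
            _ = ⊥ := hwz
      have heq : M' ⊆ M := hMmax.2 hM'S Set.subset_union_left
      have : x ∈ I := by
        have hmem : ((false : Bool), x) ∈ M' := by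
          right; exact ⟨x, ⟨⊥, hbotI, by simp⟩, rfl⟩
        exact heq hmem
      exact hxI this
    obtain ⟨i, hiI, hixF⟩ := step2
    obtain ⟨w₂, hw₂F, hw₂⟩ := hMann _ hiI
    -- the killer element
    set η : L := (w₀ ⊓ p) ⊓ (w₂ ⊓ (i ⊔ x)) with hη
    have hηF : η ∈ F := hMF.inf_mem (hMF.inf_mem hw₀F hpF) (hMF.inf_mem hw₂F hixF)
    have hηx : η ⊓ x = ⊥ := by
      refine le_bot_iff.mp ?_
      calc η ⊓ x ≤ (w₀ ⊓ p) ⊓ x := inf_le_inf_right x inf_le_left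
        _ = w₀ ⊓ (p ⊓ x) := by rw [inf_assoc]
        _ = ⊥ := hw₀
    have hηi : η ⊓ i = ⊥ := by
      refine le_bot_iff.mp ?_
      calc η ⊓ i ≤ (w₂ ⊓ (i ⊔ x)) ⊓ i := inf_le_inf_right i inf_le_right
        _ ≤ w₂ ⊓ i := inf_le_inf_right i inf_le_left
        _ = ⊥ := hw₂
    have hηle : η ≤ i ⊔ x := le_trans inf_le_right inf_le_right
    -- (Cl) with a := ⊤, b := η, c := i, d := x
    have hcl := hCl ⊤ η i x
    rw [hηi, hηx, sup_idem, inf_bot_eq, fneg_bot_eq, top_inf_eq] at hcl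
    have hηeq : η ⊓ (i ⊔ x) = η := inf_eq_left.mpr hηle
    rw [hηeq] at hcl
    -- hcl : ⊤ ≤ η ⊔ neg η
    have hsupQ : η ⊔ neg η ∈ Q := hQ.1.mem_of_le hQtop hcl
    rcases hQ.2 η (neg η) hsupQ with hη1 | hη2
    · have hixQ : i ⊔ x ∈ Q := hQ.1.mem_of_le hη1 hηle
      rcases hQ.2 i x hixQ with h | h
      · exact hMdisj i (hQF h) hiI
      · exact hxF (hQF h)
    · have hbotF : (⊥ : L) ∈ F := by
        have := hMF.inf_mem hηF (hQF hη2)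
        rwa [inf_neg] at this
      exact hMF.bot_not_mem hbotF
  refine ⟨F, ⟨hMF, ?_⟩, hQF, hGM haG⟩
  intro c e hce
  by_contra hne
  push_neg at hne
  rcases htotal c with hc | hc
  · exact hne.1 hc
  rcases htotal e with he | he
  · exact hne.2 he
  exact hMdisj (c ⊔ e) hce (hMI.sup_mem hc he)

end PairZorn

theorem hat_fundamental_hom {L : Type*} [Lattice L] [BoundedOrder L] [FNeg L]
    (hex : ExAx L) :
    hat (⊥ : L) = ∅ ∧
    hat (⊤ : L) = Set.univ ∧
    (∀ a b : L, hat (a ⊓ b) = hat a ∩ hat b) ∧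
    (∀ a b : L, hat (a ⊔ b) = hat a ∪ hat b) ∧
    (∀ a : L, hat (neg a) = hneg (hat a)) ∧
    (∀ a b : L, ¬ a ≤ b → neg a = neg b → ¬ hat a ⊆ hat b) := by
  have hVi : ViAx L := vi_of_ex hex
  have hCl : ClAx L := cl_of_ex hex
  refine ⟨?_, ?_, ?_, ?_, ?_, ?_⟩
  · ext P
    simp only [hat, Set.mem_setOf_eq, Set.mem_empty_iff_false, iff_false]
    exact P.2.1.bot_not_mem
  · ext P
    simp only [hat, Set.mem_setOf_eq, Set.mem_univ, iff_true]
    exact P.2.1.top_mem'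
  · intro a b
    ext P
    simp only [hat, Set.mem_setOf_eq, Set.mem_inter_iff]
    constructor
    · intro h
      exact ⟨P.2.1.mem_of_le h inf_le_left, P.2.1.mem_of_le h inf_le_right⟩
    · intro ⟨h1, h2⟩
      exact P.2.1.inf_mem h1 h2
  · intro a b
    ext P
    simp only [hat, Set.mem_setOf_eq, Set.mem_union]
    constructor
    · intro h
      exact P.2.2 a b h
    · rintro (h | h)
      · exact P.2.1.mem_of_le h le_sup_left
      · exact P.2.1.mem_of_le h le_sup_right
  · intro a
    ext Q
    simp only [hat, hneg, Set.mem_setOf_eq]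
    constructor
    · intro hQa R hQR hRa
      have hnegR : neg a ∈ R.1 := hQR hQa
      have hbotR : (⊥ : L) ∈ R.1 := by
        have := R.2.1.inf_mem hRa hnegR
        rwa [inf_neg] at this
      exact R.2.1.bot_not_mem hbotR
    · intro hQn
      by_contra hna
      by_cases haQ : a ∈ Q.1
      · exact hQn Q subset_rfl haQ
      · obtain ⟨R, hR, hQR, haR⟩ := prime_extension_above hCl Q.2 hna haQ
        exact hQn ⟨R, hR⟩ hQR haR
  · intro a b hab hnegEq hsubset
    have hF0 : IsFilter {y : L | a ≤ y} := by
      refine ⟨⟨a, le_rfl⟩, ?_, ?_, ?_⟩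
      · intro y z hy hz; exact le_inf hy hz
      · intro y z hy hyz; exact hy.trans hyz
      · intro h
        exact hab ((le_bot_iff.mp h) ▸ bot_le)
    have hbF0 : b ∉ {y : L | a ≤ y} := hab
    have hnnb : neg (neg b) ∈ {y : L | a ≤ y} := by
      show a ≤ neg (neg b)
      rw [← hnegEq]
      exact le_neg_neg a
    obtain ⟨R, hR, hsub, hbR⟩ := exists_prime_avoiding hVi hF0 hbF0 hnnb
    have haR : (⟨R, hR⟩ : PF L) ∈ hat a := hsub (le_refl a)
    exact hbR (hsubset haR)
end
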